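/- For every n ≥ 3, there exists a 2-critical ordered matching with at least n vertices. -/

import Mathlib

/-!
Common framework: ordered graphs on vertex set `Fin n` (the vertex order is the
order of `Fin n`), with edges encoded as pairs `(u, v)` with `u < v`.
-/

namespace MixedLayouts

/-- An ordered graph: vertices `Fin n` (with their natural linear order),
edges given as ordered pairs `(u, v)` with `u < v`. -/
structure OGraph where
  n : ℕ
  E : Finset (Fin n × Fin n)
  lt_of_mem : ∀ e ∈ E, e.1 < e.2

/-- Two edges `e = uv`, `f = xy` cross: `u ≺ x ≺ v ≺ y` (or symmetrically). -/
def Cross {n : ℕ} (e f : Fin n × Fin n) : Prop :=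
  (e.1 < f.1 ∧ f.1 < e.2 ∧ e.2 < f.2) ∨ (f.1 < e.1 ∧ e.1 < f.2 ∧ f.2 < e.2)

/-- Two edges `e = uv`, `f = xy` nest: `u ≺ x ≺ y ≺ v` (or symmetrically). -/
def Nest {n : ℕ} (e f : Fin n × Fin n) : Prop :=
  (e.1 < f.1 ∧ f.2 < e.2) ∨ (f.1 < e.1 ∧ e.2 < f.2)

/-- `e ↗ f`: both endpoints increase (for separated layouts this is crossing). -/
def Up {n : ℕ} (e f : Fin n × Fin n) : Prop := e.1 < f.1 ∧ e.2 < f.2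

/-- `e ↘ f`: first endpoint increases, second decreases
(for separated layouts this means `f` nests inside `e`). -/
def Down {n : ℕ} (e f : Fin n × Fin n) : Prop := e.1 < f.1 ∧ f.2 < e.2

namespace OGraph

/-- Degree of a vertex. -/
def degree (G : OGraph) (v : Fin G.n) : ℕ :=
  (G.E.filter fun e => e.1 = v ∨ e.2 = v).card

/-- An ordered matching: every vertex has degree exactly one. -/
def IsMatching (G : OGraph) : Prop := ∀ v : Fin G.n, G.degree v = 1

/-- A separated layout of a bipartite ordered graph: there is a threshold `t`
such that every edge goes from a vertex before `t` to a vertex from `t` on. -/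
def Separated (G : OGraph) : Prop :=
  ∃ t : ℕ, ∀ e ∈ G.E, (e.1 : ℕ) < t ∧ t ≤ (e.2 : ℕ)

/-- An `s`-stack `q`-queue layout: a partition of the edges into `s` stacks
(pages `0, …, s-1`, pairwise non-crossing) and `q` queues
(pages `s, …, s+q-1`, pairwise non-nesting). -/
def HasLayout (G : OGraph) (s q : ℕ) : Prop :=
  ∃ c : Fin G.n × Fin G.n → ℕ,
    (∀ e ∈ G.E, c e < s + q) ∧
    ∀ e ∈ G.E, ∀ f ∈ G.E, c e = c f →
      (c e < s → ¬ Cross e f) ∧ (s ≤ c e → ¬ Nest e f)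

/-- The mixed page number: the minimum of `s + q` over all
`s`-stack `q`-queue layouts. -/
noncomputable def mn (G : OGraph) : ℕ :=
  sInf {m | ∃ s q, s + q = m ∧ G.HasLayout s q}

/-- A `t`-thick `k`-twist: `k` groups of `t` edges each, edges within a group
pairwise nest, edges from different groups pairwise cross. -/
def HasThickTwist (G : OGraph) (k t : ℕ) : Prop :=
  ∃ e : Fin k → Fin t → Fin G.n × Fin G.n,
    (∀ i j, e i j ∈ G.E) ∧
    (Function.Injective fun p : Fin k × Fin t => e p.1 p.2) ∧
    (∀ i : Fin k, ∀ j j' : Fin t, j ≠ j' → Nest (e i j) (e i j')) ∧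
    (∀ i i' : Fin k, ∀ j j' : Fin t, i ≠ i' → Cross (e i j) (e i' j'))

/-- A `t`-thick `k`-rainbow: `k` groups of `t` edges each, edges within a group
pairwise cross, edges from different groups pairwise nest. -/
def HasThickRainbow (G : OGraph) (k t : ℕ) : Prop :=
  ∃ e : Fin k → Fin t → Fin G.n × Fin G.n,
    (∀ i j, e i j ∈ G.E) ∧
    (Function.Injective fun p : Fin k × Fin t => e p.1 p.2) ∧
    (∀ i : Fin k, ∀ j j' : Fin t, j ≠ j' → Cross (e i j) (e i j')) ∧
    (∀ i i' : Fin k, ∀ j j' : Fin t, i ≠ i' → Nest (e i j) (e i' j'))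

/-- A `k`-thick pattern: a `k`-thick `k`-twist or a `k`-thick `k`-rainbow. -/
def HasThickPattern (G : OGraph) (k : ℕ) : Prop :=
  G.HasThickTwist k k ∨ G.HasThickRainbow k k

/-- `G` contains a `k`-⋄-pattern: `k²` edges `e i j` with
`e i j ↗ e i j'` for `j < j'` and `e i j ↘ e i' j` for `i < i'`. -/
def HasDiamond (G : OGraph) (k : ℕ) : Prop :=
  ∃ e : Fin k → Fin k → Fin G.n × Fin G.n,
    (∀ i j, e i j ∈ G.E) ∧
    (Function.Injective fun p : Fin k × Fin k => e p.1 p.2) ∧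
    (∀ i : Fin k, ∀ j j' : Fin k, j < j' → Up (e i j) (e i j')) ∧
    (∀ j : Fin k, ∀ i i' : Fin k, i < i' → Down (e i j) (e i' j))

/-- The edge set of `G` is exactly a `k`-⋄-pattern. -/
def FormsDiamond (G : OGraph) (k : ℕ) : Prop :=
  ∃ e : Fin k → Fin k → Fin G.n × Fin G.n,
    (Function.Injective fun p : Fin k × Fin k => e p.1 p.2) ∧
    (∀ i : Fin k, ∀ j j' : Fin k, j < j' → Up (e i j) (e i j')) ∧
    (∀ j : Fin k, ∀ i i' : Fin k, i < i' → Down (e i j) (e i' j)) ∧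
    G.E = Finset.image (fun p : Fin k × Fin k => e p.1 p.2) Finset.univ

/-- Delete an edge. -/
def erase (G : OGraph) (e : Fin G.n × Fin G.n) : OGraph :=
  ⟨G.n, G.E.erase e, fun f hf => G.lt_of_mem f (Finset.mem_of_mem_erase hf)⟩

/-- `(s,q)`-critical: no `s`-stack `q`-queue layout, but every one-edge-deleted
subgraph has one. -/
def IsSQCritical (G : OGraph) (s q : ℕ) : Prop :=
  ¬ G.HasLayout s q ∧ ∀ e ∈ G.E, (G.erase e).HasLayout s q

/-- `k`-critical: `mn G > k`, but `mn (G - e) ≤ k` for every edge `e`. -/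
def IsKCritical (G : OGraph) (k : ℕ) : Prop :=
  k < G.mn ∧ ∀ e ∈ G.E, (G.erase e).mn ≤ k

end OGraph

/-- An ordered graph `G` contains the pattern `H`: an order-preserving injection
of the vertices mapping edges to edges. -/
def Contains (G H : OGraph) : Prop :=
  ∃ φ : Fin H.n → Fin G.n, StrictMono φ ∧ ∀ e ∈ H.E, (φ e.1, φ e.2) ∈ G.E

/-- A chain of the poset `P(M)` of a separated matching
(elements: edges; order: `↗`). -/
def IsPChain {n : ℕ} (C : Finset (Fin n × Fin n)) : Prop :=
  ∀ e ∈ C, ∀ f ∈ C, e ≠ f → Up e f ∨ Up f e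

/-- An antichain of the poset `P(M)` of a separated matching. -/
def IsPAntichain {n : ℕ} (C : Finset (Fin n × Fin n)) : Prop :=
  ∀ e ∈ C, ∀ f ∈ C, e ≠ f → ¬ Up e f ∧ ¬ Up f e

/-- `c_i` for an abstract finite poset: the maximum number of elements
covered by `i` chains. -/
noncomputable def chainCover (α : Type) [Fintype α] [PartialOrder α] [DecidableEq α]
    (i : ℕ) : ℕ :=
  sSup {m | ∃ C : Fin i → Finset α,
    (∀ j, IsChain (· ≤ ·) (C j : Set α)) ∧ (Finset.univ.biUnion C).card = m}

/-- `a_i` for an abstract finite poset: the maximum number of elements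
covered by `i` antichains. -/
noncomputable def antichainCover (α : Type) [Fintype α] [PartialOrder α] [DecidableEq α]
    (i : ℕ) : ℕ :=
  sSup {m | ∃ A : Fin i → Finset α,
    (∀ j, IsAntichain (· ≤ ·) (A j : Set α)) ∧ (Finset.univ.biUnion A).card = m}

end MixedLayouts

/-!
Fix `k` and number the edges of an ordered matching on `4k + 14` vertices `0, …, 2k + 6` (edge `t`
joins `left k t < right k t`). Edges `0, …, 2k + 2` form a closed chain, each crossing the next
and `A = 2k + 2` crossing `0`: an odd cycle of the crossing graph, which rules out two stacks.
`D₁ = 2k + 4`, `D₂ = 2k + 5` and `E = 2k + 6` pairwise nest, which rules out two queues.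
`B = 2k + 1` nests over `C = 2k + 3` and both cross `D₁` and `D₂`, which rules out one stack and
one queue. Every edge lies in one of these three obstructions, and deleting it leaves a graph with
an explicit layout on two pages.
-/

namespace MixedLayouts

namespace OGraph

variable {G : OGraph}

lemma HasLayout.mono {s q s' q' : ℕ} (h : G.HasLayout s q) (hs : s ≤ s') (hq : q ≤ q') :
    G.HasLayout s' q' := by
  obtain ⟨c, hlt, hok⟩ := h
  -- queue pages are shifted up by `s' - s` so that they stay behind the stack pages
  let c' e := if c e < s then c e else c e + (s' - s)
  refine ⟨c', fun e he => ?_, fun e he f hf hef => ?_⟩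
  · have := hlt e he
    simp only [c']; split_ifs <;> omega
  · have hce := hlt e he
    have hcf := hlt f hf
    simp only [c'] at hef ⊢
    split_ifs at hef ⊢ with h₁ h₂ h₂
    · exact ⟨fun _ => (hok e he f hf hef).1 h₁, by omega⟩
    · omega
    · omega
    · exact ⟨by omega, fun _ => (hok e he f hf (by omega)).2 (by omega)⟩

lemma hasLayout_of_coloring {ι : Type*} {s q : ℕ} (edge : ι → Fin G.n × Fin G.n) (S : Set ι)
    (hS : ∀ e ∈ G.E, ∃ i ∈ S, edge i = e) (col : ι → ℕ) (hlt : ∀ i ∈ S, col i < s + q)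
    (hok : ∀ i ∈ S, ∀ j ∈ S, col i = col j →
      (col i < s → ¬ Cross (edge i) (edge j)) ∧ (s ≤ col i → ¬ Nest (edge i) (edge j))) :
    G.HasLayout s q := by
  classical
  choose idx hidx using hS
  refine ⟨fun e => if he : e ∈ G.E then col (idx e he) else 0, fun e he => ?_,
    fun e he f hf hef => ?_⟩
  · simpa [he] using hlt _ (hidx e he).1
  · simp only [he, hf, dite_true] at hef ⊢
    have := hok _ (hidx e he).1 _ (hidx f hf).1 hef
    rwa [(hidx e he).2, (hidx f hf).2] at this

lemma hasLayout_mul_self : G.HasLayout (G.n * G.n) 0 := by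
  refine hasLayout_of_coloring id G.E (fun e he => ⟨e, he, rfl⟩)
    (fun e => finProdFinEquiv e) (fun e _ => by simpa using (finProdFinEquiv e).isLt)
    fun e _ f _ hef => ?_
  obtain rfl : e = f := finProdFinEquiv.injective (Fin.ext hef)
  simp [Cross, Nest]

lemma mn_le_of_hasLayout {s q : ℕ} (h : G.HasLayout s q) : G.mn ≤ s + q :=
  Nat.sInf_le ⟨s, q, rfl, h⟩

lemma lt_mn_of_forall_not_hasLayout {k : ℕ} (h : ∀ s q, s + q = k → ¬ G.HasLayout s q) :
    k < G.mn := by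
  obtain ⟨s, q, hsq, hl⟩ : G.mn ∈ {m | ∃ s q, s + q = m ∧ G.HasLayout s q} :=
    Nat.sInf_mem ⟨_, _, _, rfl, hasLayout_mul_self⟩
  by_contra! hle
  exact h s (k - s) (by omega) (hl.mono le_rfl (by omega))

lemma not_hasLayout_two_zero_of_odd_crossing_cycle (e : ℕ → Fin G.n × Fin G.n) {m : ℕ}
    (hm : Even m) (hmem : ∀ i ≤ m, e i ∈ G.E) (hcross : ∀ i < m, Cross (e i) (e (i + 1)))
    (hclose : Cross (e m) (e 0)) : ¬ G.HasLayout 2 0 := by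
  rintro ⟨c, hlt, hok⟩
  have hne : ∀ i ≤ m, ∀ j ≤ m, Cross (e i) (e j) → c (e i) ≠ c (e j) := fun i hi j hj hij heq =>
    (hok _ (hmem i hi) _ (hmem j hj) heq).1 (hlt _ (hmem i hi)) hij
  have hcol : ∀ i ≤ m, c (e i) = (c (e 0) + i) % 2 := by
    intro i hi
    induction i with
    | zero => have := hlt _ (hmem 0 hi); omega
    | succ i ih =>
      have := ih (by omega)
      have := hne i (by omega) (i + 1) hi (hcross i (by omega))
      have := hlt _ (hmem (i + 1) hi)
      omega
  obtain ⟨r, rfl⟩ := hm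
  have := hcol (r + r) le_rfl
  have := hlt _ (hmem 0 (Nat.zero_le _))
  exact hne _ le_rfl 0 (Nat.zero_le _) hclose (by omega)

lemma not_hasLayout_zero_two_of_nest_triangle {a b c : Fin G.n × Fin G.n} (ha : a ∈ G.E)
    (hb : b ∈ G.E) (hc : c ∈ G.E) (hab : Nest a b) (hac : Nest a c) (hbc : Nest b c) :
    ¬ G.HasLayout 0 2 := by
  rintro ⟨col, hlt, hok⟩
  have := hlt a ha; have := hlt b hb; have := hlt c hc
  rcases (by omega : col a = col b ∨ col a = col c ∨ col b = col c) with h | h | h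
  · exact (hok a ha b hb h).2 (Nat.zero_le _) hab
  · exact (hok a ha c hc h).2 (Nat.zero_le _) hac
  · exact (hok b hb c hc h).2 (Nat.zero_le _) hbc

/-- The stack cannot take either of the nested edges `d`, `d'`, since both `b` and `c` cross
it and would then be forced into the queue together although they nest. -/
lemma not_hasLayout_one_one {b c d d' : Fin G.n × Fin G.n} (hb : b ∈ G.E) (hc : c ∈ G.E)
    (hd : d ∈ G.E) (hd' : d' ∈ G.E) (hbc : Nest b c) (hdd' : Nest d d')
    (hbd : Cross b d) (hbd' : Cross b d') (hcd : Cross c d) (hcd' : Cross c d') :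
    ¬ G.HasLayout 1 1 := by
  rintro ⟨col, hlt, hok⟩
  have hqueue : ∀ x ∈ G.E, Cross b x → Cross c x → col x = 1 := by
    intro x hx hbx hcx
    by_contra hx1
    have := hlt x hx; have := hlt b hb; have := hlt c hc
    have hb1 : col b = 1 := by
      by_contra
      exact (hok b hb x hx (by omega)).1 (by omega) hbx
    have hc1 : col c = 1 := by
      by_contra
      exact (hok c hc x hx (by omega)).1 (by omega) hcx
    exact (hok b hb c hc (hb1.trans hc1.symm)).2 (by omega) hbc
  have h := hqueue d hd hbd hcd
  exact (hok d hd d' hd' (h.trans (hqueue d' hd' hbd' hcd').symm)).2 h.ge hdd'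

lemma isMatching_of_pairwiseDisjoint
    (hdisj : (G.E : Set (Fin G.n × Fin G.n)).PairwiseDisjoint fun e => ({e.1, e.2} : Finset _))
    (hcard : 2 * G.E.card = G.n) : G.IsMatching := by
  have hends : ∀ e ∈ G.E, ({e.1, e.2} : Finset (Fin G.n)).card = 2 := fun e he =>
    Finset.card_pair (G.lt_of_mem e he).ne
  have hcover : G.E.biUnion (fun e => {e.1, e.2}) = Finset.univ := by
    apply Finset.eq_univ_of_card
    rw [Finset.card_biUnion hdisj, Finset.sum_congr rfl hends, Finset.sum_const, smul_eq_mul,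
      mul_comm, hcard, Fintype.card_fin]
  intro v
  obtain ⟨e, he, hve⟩ := Finset.mem_biUnion.1 (hcover ▸ Finset.mem_univ v)
  rw [degree, Finset.card_eq_one]
  refine ⟨e, Finset.eq_singleton_iff_unique_mem.2 ⟨?_, fun f hf => ?_⟩⟩
  · simp only [Finset.mem_insert, Finset.mem_singleton] at hve
    exact Finset.mem_filter.2 ⟨he, hve.imp Eq.symm Eq.symm⟩
  · obtain ⟨hf, hvf⟩ := Finset.mem_filter.1 hf
    by_contra hfe
    refine Finset.disjoint_left.1 (hdisj hf he hfe) ?_ hve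
    simp only [Finset.mem_insert, Finset.mem_singleton]
    exact hvf.imp Eq.symm Eq.symm

end OGraph

namespace CriticalMatching

def left (k t : ℕ) : ℕ :=
  if t ≤ 2*k then 2*t
  else if t = 2*k+1 then 4*k+2
  else if t = 2*k+2 then 1
  else if t = 2*k+3 then 4*k+5
  else if t = 2*k+4 then 4*k+6
  else if t = 2*k+5 then 4*k+7
  else 4*k+10

def right (k t : ℕ) : ℕ :=
  if t ≤ 2*k then 2*t+3
  else if t = 2*k+1 then 4*k+9
  else if t = 2*k+2 then 4*k+4
  else if t = 2*k+3 then 4*k+8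
  else if t = 2*k+4 then 4*k+13
  else if t = 2*k+5 then 4*k+12
  else 4*k+11

lemma endpoints_cases (k t : ℕ) :
    (t ≤ 2*k ∧ left k t = 2*t ∧ right k t = 2*t+3) ∨
    (t = 2*k+1 ∧ left k t = 4*k+2 ∧ right k t = 4*k+9) ∨
    (t = 2*k+2 ∧ left k t = 1 ∧ right k t = 4*k+4) ∨
    (t = 2*k+3 ∧ left k t = 4*k+5 ∧ right k t = 4*k+8) ∨
    (t = 2*k+4 ∧ left k t = 4*k+6 ∧ right k t = 4*k+13) ∨
    (t = 2*k+5 ∧ left k t = 4*k+7 ∧ right k t = 4*k+12) ∨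
    (2*k+6 ≤ t ∧ left k t = 4*k+10 ∧ right k t = 4*k+11) := by
  unfold left right
  split_ifs <;> grind

def edge (k t : ℕ) : Fin (4*k+14) × Fin (4*k+14) :=
  (⟨left k t, by have := endpoints_cases k t; omega⟩,
    ⟨right k t, by have := endpoints_cases k t; omega⟩)

def graph (k : ℕ) : OGraph where
  n := 4*k+14
  E := (Finset.range (2*k+7)).image (edge k)
  lt_of_mem := by
    simp only [Finset.mem_image, Finset.mem_range]
    rintro _ ⟨t, -, rfl⟩
    exact Fin.mk_lt_mk.2 (by have := endpoints_cases k t; omega)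

lemma mem_graph_E {k : ℕ} {e : Fin (4*k+14) × Fin (4*k+14)} :
    e ∈ (graph k).E ↔ ∃ t < 2*k+7, edge k t = e := by
  show e ∈ (Finset.range (2*k+7)).image (edge k) ↔ _
  simp only [Finset.mem_image, Finset.mem_range]

lemma edge_mem {k t : ℕ} (ht : t < 2*k+7) : edge k t ∈ (graph k).E :=
  mem_graph_E.2 ⟨t, ht, rfl⟩

lemma eq_of_edge_endpoint {k t t' x : ℕ} (ht : t < 2*k+7) (ht' : t' < 2*k+7)
    (h : left k t = x ∨ right k t = x) (h' : left k t' = x ∨ right k t' = x) : t = t' := by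
  have := endpoints_cases k t; have := endpoints_cases k t'; omega

lemma edge_injOn (k : ℕ) : Set.InjOn (edge k) (Finset.range (2*k+7)) := fun _ ht _ ht' h =>
  eq_of_edge_endpoint (Finset.mem_range.1 ht) (Finset.mem_range.1 ht')
    (Or.inl (congrArg (·.1.val) h)) (Or.inl rfl)

lemma isMatching (k : ℕ) : (graph k).IsMatching := by
  refine OGraph.isMatching_of_pairwiseDisjoint ?_ ?_
  · intro e he f hf hne
    obtain ⟨t, ht, rfl⟩ := mem_graph_E.1 he
    obtain ⟨t', ht', rfl⟩ := mem_graph_E.1 hf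
    refine Finset.disjoint_left.2 fun v hv hv' => hne (congrArg _ ?_)
    rw [Finset.mem_insert, Finset.mem_singleton] at hv hv'
    exact eq_of_edge_endpoint ht ht'
      (hv.imp (congrArg Fin.val ·.symm) (congrArg Fin.val ·.symm))
      (hv'.imp (congrArg Fin.val ·.symm) (congrArg Fin.val ·.symm))
  · simp only [graph, Finset.card_image_of_injOn (edge_injOn k), Finset.card_range]
    ring

lemma cross_edge_iff {k t t' : ℕ} (ht : t < 2*k+7) (ht' : t' < 2*k+7) :
    Cross (edge k t) (edge k t') ↔
      ((t' = t+1 ∧ t' ≤ 2*k+2) ∨ (t = 0 ∧ t' = 2*k+2) ∨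
        ((t = 2*k+1 ∨ t = 2*k+3) ∧ (t' = 2*k+4 ∨ t' = 2*k+5)) ∨
       (t = t'+1 ∧ t ≤ 2*k+2) ∨ (t' = 0 ∧ t = 2*k+2) ∨
        ((t' = 2*k+1 ∨ t' = 2*k+3) ∧ (t = 2*k+4 ∨ t = 2*k+5))) := by
  simp only [Cross, edge, Fin.mk_lt_mk]
  rcases endpoints_cases k t with ⟨h, l, r⟩ | ⟨h, l, r⟩ | ⟨h, l, r⟩ | ⟨h, l, r⟩ | ⟨h, l, r⟩ |
    ⟨h, l, r⟩ | ⟨h, l, r⟩ <;>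
  rcases endpoints_cases k t' with ⟨h', l', r'⟩ | ⟨h', l', r'⟩ | ⟨h', l', r'⟩ | ⟨h', l', r'⟩ |
    ⟨h', l', r'⟩ | ⟨h', l', r'⟩ | ⟨h', l', r'⟩ <;>
  omega

lemma down_edge_iff {k t t' : ℕ} (ht : t < 2*k+7) (ht' : t' < 2*k+7) :
    Down (edge k t) (edge k t') ↔
      ((t = 2*k+2 ∧ 1 ≤ t' ∧ t' ≤ 2*k) ∨ (t = 2*k+1 ∧ t' = 2*k+3) ∨
        (t = 2*k+4 ∧ (t' = 2*k+5 ∨ t' = 2*k+6)) ∨ (t = 2*k+5 ∧ t' = 2*k+6)) := by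
  simp only [Down, edge, Fin.mk_lt_mk]
  rcases endpoints_cases k t with ⟨h, l, r⟩ | ⟨h, l, r⟩ | ⟨h, l, r⟩ | ⟨h, l, r⟩ | ⟨h, l, r⟩ |
    ⟨h, l, r⟩ | ⟨h, l, r⟩ <;>
  rcases endpoints_cases k t' with ⟨h', l', r'⟩ | ⟨h', l', r'⟩ | ⟨h', l', r'⟩ | ⟨h', l', r'⟩ |
    ⟨h', l', r'⟩ | ⟨h', l', r'⟩ | ⟨h', l', r'⟩ <;>
  omega

lemma two_lt_mn (k : ℕ) : 2 < (graph k).mn := by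
  have hmem : ∀ {t}, t < 2*k+7 → edge k t ∈ (graph k).E := edge_mem
  refine OGraph.lt_mn_of_forall_not_hasLayout fun s q hsq => ?_
  rcases (by omega : s = 2 ∧ q = 0 ∨ s = 1 ∧ q = 1 ∨ s = 0 ∧ q = 2) with
    ⟨rfl, rfl⟩ | ⟨rfl, rfl⟩ | ⟨rfl, rfl⟩
  · refine OGraph.not_hasLayout_two_zero_of_odd_crossing_cycle (edge k) (m := 2*k+2)
      ⟨k+1, by ring⟩ (fun i hi => hmem (by omega)) (fun i hi => ?_) ?_
    all_goals exact (cross_edge_iff (by omega) (by omega)).2 (by omega)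
  · refine OGraph.not_hasLayout_one_one (hmem (t := 2*k+1) (by omega))
      (hmem (t := 2*k+3) (by omega)) (hmem (t := 2*k+4) (by omega))
      (hmem (t := 2*k+5) (by omega)) (Or.inl ((down_edge_iff ?_ ?_).2 ?_))
      (Or.inl ((down_edge_iff ?_ ?_).2 ?_)) ?_ ?_ ?_ ?_
    all_goals first | omega | exact (cross_edge_iff (by omega) (by omega)).2 (by omega)
  · refine OGraph.not_hasLayout_zero_two_of_nest_triangle (hmem (t := 2*k+4) (by omega))
      (hmem (t := 2*k+5) (by omega)) (hmem (t := 2*k+6) (by omega))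
      (Or.inl ((down_edge_iff ?_ ?_).2 ?_)) (Or.inl ((down_edge_iff ?_ ?_).2 ?_))
      (Or.inl ((down_edge_iff ?_ ?_).2 ?_))
    all_goals omega

lemma hasLayout_erase_of_coloring {k d s q : ℕ} (col : ℕ → ℕ)
    (hlt : ∀ t < 2*k+7, col t < s + q)
    (hok : ∀ t < 2*k+7, ∀ t' < 2*k+7, t ≠ d → t' ≠ d → col t = col t' →
      (col t < s → ¬ Cross (edge k t) (edge k t')) ∧
      (s ≤ col t → ¬ Down (edge k t) (edge k t') ∧ ¬ Down (edge k t') (edge k t))) :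
    ((graph k).erase (edge k d)).HasLayout s q := by
  refine OGraph.hasLayout_of_coloring (edge k) {t | t < 2*k+7 ∧ t ≠ d} (fun e he => ?_) col
    (fun t ht => hlt t ht.1) fun t ht t' ht' h => ?_
  · obtain ⟨hne, he⟩ := Finset.mem_erase.1 he
    obtain ⟨t, ht, rfl⟩ := mem_graph_E.1 he
    exact ⟨t, ⟨ht, fun htd => hne (htd ▸ rfl)⟩, rfl⟩
  · obtain ⟨hcross, hdown⟩ := hok t ht.1 t' ht'.1 ht.2 ht'.2 h
    exact ⟨hcross, fun hs hnest => (hdown hs).elim (hnest.elim · ·)⟩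

/-- Without cycle edge `d` the cycle is a path, whose edges alternate between the two stacks;
`C` goes with `B`, and `D₁`, `D₂` to the other stack. -/
lemma hasLayout_erase_cycle_edge {k d : ℕ} (hd : d ≤ 2*k+2) :
    ((graph k).erase (edge k d)).HasLayout 2 0 := by
  let b := if 2*k+1 < d then 0 else 1
  refine hasLayout_erase_of_coloring (fun t => if t ≤ 2*k+2 then (t + if t < d then 1 else 0) % 2
    else if t = 2*k+3 then b else if t ≤ 2*k+5 then 1 - b else 0) (fun t _ => ?_)
    fun t ht t' ht' htd htd' h => ⟨fun _ => ?_, fun h2 => ?_⟩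
  · simp only [b]
    split_ifs <;> omega
  · rw [cross_edge_iff ht ht']
    simp only [b] at h
    split_ifs at h <;> omega
  · simp only [b] at h2
    split_ifs at h2 <;> omega

lemma hasLayout_erase_C (k : ℕ) : ((graph k).erase (edge k (2*k+3))).HasLayout 1 1 := by
  refine hasLayout_erase_of_coloring (fun t => if t = 2*k+2 ∨ 2*k+4 ≤ t then 0 else 1)
    (fun t _ => by split_ifs <;> omega) fun t ht t' ht' htd htd' h => ⟨fun hs => ?_, fun hq => ?_⟩
  · rw [cross_edge_iff ht ht']
    split_ifs at h hs <;> omega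
  · rw [down_edge_iff ht ht', down_edge_iff ht' ht]
    split_ifs at h hq <;> omega

lemma hasLayout_erase_triangle_edge {k d : ℕ} (hd : d = 2*k+4 ∨ d = 2*k+5 ∨ d = 2*k+6) :
    ((graph k).erase (edge k d)).HasLayout 0 2 := by
  -- `A`, `C` and one surviving edge of the triangle form one queue, everything else the other
  let x := if d = 2*k+4 then 2*k+6 else 2*k+4
  refine hasLayout_erase_of_coloring (fun t => if t = 2*k+2 ∨ t = 2*k+3 ∨ t = x then 0 else 1)
    (fun t _ => by split_ifs <;> omega) fun t ht t' ht' htd htd' h => ⟨fun h0 => ?_, fun _ => ?_⟩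
  · split_ifs at h0 <;> omega
  · rw [down_edge_iff ht ht', down_edge_iff ht' ht]
    simp only [x] at h
    split_ifs at h <;> omega

lemma mn_erase_le_two {k : ℕ} {e : Fin (4*k+14) × Fin (4*k+14)} (he : e ∈ (graph k).E) :
    ((graph k).erase e).mn ≤ 2 := by
  obtain ⟨d, hd, rfl⟩ := mem_graph_E.1 he
  rcases (by omega : d ≤ 2*k+2 ∨ d = 2*k+3 ∨ 2*k+4 ≤ d) with hd' | rfl | hd'
  · exact OGraph.mn_le_of_hasLayout (hasLayout_erase_cycle_edge hd')
  · exact OGraph.mn_le_of_hasLayout (hasLayout_erase_C k)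
  · exact OGraph.mn_le_of_hasLayout (hasLayout_erase_triangle_edge (by omega))

end CriticalMatching

theorem exists_large_two_critical_matching_general (n : ℕ) :
    ∃ G : OGraph, G.IsMatching ∧ n ≤ G.n ∧ G.IsKCritical 2 :=
  ⟨CriticalMatching.graph n, CriticalMatching.isMatching n, show n ≤ 4*n+14 by omega,
    CriticalMatching.two_lt_mn n, fun _ he => CriticalMatching.mn_erase_le_two he⟩

/-- For every `n ≥ 3`, there exists a `2`-critical ordered
matching with at least `n` vertices. -/
theorem exists_large_two_critical_matching (n : ℕ) (hn : 3 ≤ n) :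
    ∃ G : OGraph, G.IsMatching ∧ n ≤ G.n ∧ G.IsKCritical 2 :=
  exists_large_two_critical_matching_general n

end MixedLayouts
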